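/- arXiv:1705.06499 — 4 statements merged into one kernel-verified Lean document; each statement's English description precedes it below -/
import Mathlib

section
/- Let A : R^{m×n} → R^q be linear with A A* = I_q, and let α, β ∈ R with 1/α + 1/β = 1 (hence α ≠ 0, β ≠ 0). For W ∈ R^{m×n} and b ∈ R^q, define Z = (I − (β/(α+β)) A* A)(W) + (β/(α+β)) A*(b). Then (α/2)‖W − Z‖_F^2 + (β/2)‖A(Z) − b‖^2 = (1/2)‖A(W) − b‖^2. -/
open Matrix

/-- Squared Frobenius norm. -/
noncomputable def fsq {m n : ℕ} (W : Matrix (Fin m) (Fin n) ℝ) : ℝ := ∑ i, ∑ j, W i j ^ 2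

/-- Squared Euclidean norm. -/
noncomputable def esq {m : ℕ} (v : Fin m → ℝ) : ℝ := ∑ i, v i ^ 2

lemma fsq_smul {m n : ℕ} (c : ℝ) (W : Matrix (Fin m) (Fin n) ℝ) :
    fsq (c • W) = c ^ 2 * fsq W := by
  simp [fsq, Finset.mul_sum, Matrix.smul_apply, mul_pow]

lemma esq_smul {m : ℕ} (c : ℝ) (v : Fin m → ℝ) :
    esq (c • v) = c ^ 2 * esq v := by
  simp [esq, Finset.mul_sum, mul_pow]

/-- with `A A* = I_q`, `1/α + 1/β = 1` (so `α ≠ 0, β ≠ 0`), and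
`Z = (I − (β/(α+β)) A* A)(W) + (β/(α+β)) A*(b)`, one has
`(α/2)‖W − Z‖_F² + (β/2)‖A(Z) − b‖² = (1/2)‖A(W) − b‖²`. -/
theorem stmt5 {m n q : ℕ}
    (A : Matrix (Fin m) (Fin n) ℝ →ₗ[ℝ] (Fin q → ℝ))
    (Astar : (Fin q → ℝ) →ₗ[ℝ] Matrix (Fin m) (Fin n) ℝ)
    (hadj : ∀ (W : Matrix (Fin m) (Fin n) ℝ) (u : Fin q → ℝ),
      ∑ i, A W i * u i = ∑ i, ∑ j, W i j * Astar u i j)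
    (hAAs : ∀ u, A (Astar u) = u)
    (α β : ℝ) (hα : α ≠ 0) (hβ : β ≠ 0) (hsum : 1 / α + 1 / β = 1)
    (W : Matrix (Fin m) (Fin n) ℝ) (b : Fin q → ℝ)
    (Z : Matrix (Fin m) (Fin n) ℝ)
    (hZ : Z = W - (β / (α + β)) • Astar (A W) + (β / (α + β)) • Astar b) :
    α / 2 * fsq (W - Z) + β / 2 * esq (A Z - b) = 1 / 2 * esq (A W - b) := by
  have hab : α + β = α * β := by field_simp at hsum; linarith
  have habne : α + β ≠ 0 := by rw [hab]; exact mul_ne_zero hα hβ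
  have hc : β / (α + β) = 1 / α := by
    rw [hab]; field_simp
  set r : Fin q → ℝ := A W - b with hr
  have hWZ : W - Z = (1 / α) • Astar r := by
    rw [hZ, hc, hr, map_sub]
    module
  have hAZ : A Z - b = (1 / β) • r := by
    have h1 : (1 : ℝ) / β = 1 - 1 / α := by linarith
    rw [hZ, hc, map_add, map_sub, A.map_smul, A.map_smul, hAAs, hAAs, hr, h1]
    module
  have key : fsq (Astar r) = esq r := by
    have := hadj (Astar r) r
    rw [hAAs] at this
    simp only [fsq, esq, ← this, sq]
  rw [hWZ, hAZ, fsq_smul, esq_smul, key]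
  have : α / 2 * ((1 / α) ^ 2 * esq r) + β / 2 * ((1 / β) ^ 2 * esq r)
      = (1 / α + 1 / β) * (1 / 2 * esq r) := by
    field_simp
  rw [this, hsum, one_mul]
end

section
/- Let A : R^{m×n} → R^q be linear with A A* = I_q, let α, β ∈ R with 1/α + 1/β = 1, and let Ψ : R^{m×r} → (−∞,∞], Φ : R^{n×r} → (−∞,∞] be proper functions. Suppose (X*, Y*, Z*) satisfies: (i) −α(X*(Y*)^T − Z*)Y* ∈ ∂Ψ(X*), (ii) −α(X*(Y*)^T − Z*)^T X* ∈ ∂Φ(Y*), and (iii) α(Z* − X*(Y*)^T) + β A*(A(Z*) − b) = 0. Then −A*(A(X*(Y*)^T) − b) Y* ∈ ∂Ψ(X*) and −(A*(A(X*(Y*)^T) − b))^T X* ∈ ∂Φ(Y*), i.e., (X*, Y*) is a stationary point of F(X,Y) = Ψ(X) + Φ(Y) + (1/2)‖A(X Y^T) − b‖^2. -/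
open Matrix

/-- a stationary point of the potential `Θ_{α,β}` yields a stationary point
of `F`. The limiting subdifferentials `∂Ψ(X*)` and `∂Φ(Y*)` are represented by the sets
`SΨ` and `SΦ`. -/
theorem stmt17 {m n q r : ℕ}
    (A : Matrix (Fin m) (Fin n) ℝ →ₗ[ℝ] (Fin q → ℝ))
    (Astar : (Fin q → ℝ) →ₗ[ℝ] Matrix (Fin m) (Fin n) ℝ)
    (hadj : ∀ (W : Matrix (Fin m) (Fin n) ℝ) (u : Fin q → ℝ),
      ∑ i, A W i * u i = ∑ i, ∑ j, W i j * Astar u i j)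
    (hAAs : ∀ u, A (Astar u) = u)
    (α β : ℝ) (hα : α ≠ 0) (hβ : β ≠ 0) (hsum : 1 / α + 1 / β = 1)
    (b : Fin q → ℝ)
    (Xs : Matrix (Fin m) (Fin r) ℝ) (Ys : Matrix (Fin n) (Fin r) ℝ)
    (Zs : Matrix (Fin m) (Fin n) ℝ)
    (SΨ : Set (Matrix (Fin m) (Fin r) ℝ)) (SΦ : Set (Matrix (Fin n) (Fin r) ℝ))
    (h1 : -(α • ((Xs * Ysᵀ - Zs) * Ys)) ∈ SΨ)
    (h2 : -(α • ((Xs * Ysᵀ - Zs)ᵀ * Xs)) ∈ SΦ)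
    (h3 : α • (Zs - Xs * Ysᵀ) + β • Astar (A Zs - b) = 0) :
    -(Astar (A (Xs * Ysᵀ) - b) * Ys) ∈ SΨ ∧
    -((Astar (A (Xs * Ysᵀ) - b))ᵀ * Xs) ∈ SΦ := by
  have hαβ : β + α = α * β := by
    field_simp at hsum; linarith
  have hA3 := congrArg A h3
  rw [map_add, A.map_smul, A.map_smul, hAAs, map_sub, map_zero] at hA3
  have hvec : A Zs - b = (1/β) • (A (Xs * Ysᵀ) - b) := by
    funext k
    have hk := congrFun hA3 k
    simp only [Pi.add_apply, Pi.smul_apply, Pi.sub_apply, Pi.zero_apply,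
      smul_eq_mul] at hk
    simp only [Pi.sub_apply, Pi.smul_apply, smul_eq_mul]
    have hne : α + β ≠ 0 := by
      rw [show α + β = α * β by linarith]; exact mul_ne_zero hα hβ
    have hk2 : β * (A Zs k - b k) = A (Xs * Ysᵀ) k - b k := by
      have hz : (α + β) * (β * (A Zs k - b k) - (A (Xs * Ysᵀ) k - b k)) = 0 := by
        linear_combination β * hk - (A (Xs * Ysᵀ) k - b k) * hαβ
      rcases mul_eq_zero.mp hz with h' | h'
      · exact absurd h' hne
      · linarith
    field_simp
    linarith [hk2]
  have key : α • (Xs * Ysᵀ - Zs) = Astar (A (Xs * Ysᵀ) - b) := by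
    have h3' : α • (Xs * Ysᵀ - Zs) = β • Astar (A Zs - b) := by
      have h := congrArg (fun M => M - α • (Zs - Xs * Ysᵀ)) h3
      simp only [add_sub_cancel_left, zero_sub] at h
      rw [h, ← smul_neg, neg_sub]
    rw [h3', hvec, Astar.map_smul, smul_smul, mul_one_div, div_self hβ, one_smul]
  constructor
  · have e : -(Astar (A (Xs * Ysᵀ) - b) * Ys) = -(α • ((Xs * Ysᵀ - Zs) * Ys)) := by
      rw [← key, Matrix.smul_mul]
    rw [e]; exact h1
  · have e : -((Astar (A (Xs * Ysᵀ) - b))ᵀ * Xs) = -(α • ((Xs * Ysᵀ - Zs)ᵀ * Xs)) := by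
      rw [← key, transpose_smul, Matrix.smul_mul]
    rw [e]; exact h2
end

section
/- Let A : R^{m×n} → R^q be linear with A A* = I_q, α, β ∈ R with 1/α + 1/β = 1, and let (X*, Y*) satisfy −A*(A(X*(Y*)^T) − b) Y* ∈ ∂Ψ(X*) and −(A*(A(X*(Y*)^T) − b))^T X* ∈ ∂Φ(Y*). Define Z* = (I − (β/(α+β)) A* A)(X*(Y*)^T) + (β/(α+β)) A*(b). Then 0 ∈ ∂Ψ(X*) + α(X*(Y*)^T − Z*)Y*, 0 ∈ ∂Φ(Y*) + α(X*(Y*)^T − Z*)^T X*, and α(Z* − X*(Y*)^T) + β A*(A(Z*) − b) = 0. -/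
open Matrix

/-- a stationary point of `F` yields a stationary point of the potential
`Θ_{α,β}` with `Z*` chosen explicitly. The limiting subdifferentials `∂Ψ(X*)` and
`∂Φ(Y*)` are represented by the sets `SΨ` and `SΦ`; `0 ∈ ∂Ψ(X*) + α(X*(Y*)ᵀ − Z*)Y*` is
expressed as `−α(X*(Y*)ᵀ − Z*)Y* ∈ SΨ`, and similarly for `SΦ`. -/
theorem stmt18 {m n q r : ℕ}
    (A : Matrix (Fin m) (Fin n) ℝ →ₗ[ℝ] (Fin q → ℝ))
    (Astar : (Fin q → ℝ) →ₗ[ℝ] Matrix (Fin m) (Fin n) ℝ)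
    (hadj : ∀ (W : Matrix (Fin m) (Fin n) ℝ) (u : Fin q → ℝ),
      ∑ i, A W i * u i = ∑ i, ∑ j, W i j * Astar u i j)
    (hAAs : ∀ u, A (Astar u) = u)
    (α β : ℝ) (hα : α ≠ 0) (hβ : β ≠ 0) (hsum : 1 / α + 1 / β = 1)
    (b : Fin q → ℝ)
    (Xs : Matrix (Fin m) (Fin r) ℝ) (Ys : Matrix (Fin n) (Fin r) ℝ)
    (SΨ : Set (Matrix (Fin m) (Fin r) ℝ)) (SΦ : Set (Matrix (Fin n) (Fin r) ℝ))
    (h1 : -(Astar (A (Xs * Ysᵀ) - b) * Ys) ∈ SΨ)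
    (h2 : -((Astar (A (Xs * Ysᵀ) - b))ᵀ * Xs) ∈ SΦ)
    (Zs : Matrix (Fin m) (Fin n) ℝ)
    (hZs : Zs = Xs * Ysᵀ - (β / (α + β)) • Astar (A (Xs * Ysᵀ))
        + (β / (α + β)) • Astar b) :
    -(α • ((Xs * Ysᵀ - Zs) * Ys)) ∈ SΨ ∧
    -(α • ((Xs * Ysᵀ - Zs)ᵀ * Xs)) ∈ SΦ ∧
    α • (Zs - Xs * Ysᵀ) + β • Astar (A Zs - b) = 0 := by
  have hαβ : α + β = α * β := by
    field_simp at hsum; linarith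
  have hne : α + β ≠ 0 := by
    rw [hαβ]; exact mul_ne_zero hα hβ
  have hc : α * (β / (α + β)) = 1 := by
    field_simp; linarith
  have hd : β * (α / (α + β)) = 1 := by
    field_simp; linarith
  have key : Xs * Ysᵀ - Zs = (β / (α + β)) • Astar (A (Xs * Ysᵀ) - b) := by
    rw [hZs, map_sub, smul_sub]; abel
  have hAZ : A Zs - b = (α / (α + β)) • (A (Xs * Ysᵀ) - b) := by
    rw [hZs, map_add, map_sub, _root_.map_smul, _root_.map_smul, hAAs, hAAs]
    funext i
    simp only [Pi.add_apply, Pi.sub_apply, Pi.smul_apply, smul_eq_mul]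
    field_simp
    ring
  refine ⟨?_, ?_, ?_⟩
  · rw [key, Matrix.smul_mul, smul_smul, hc, one_smul]; exact h1
  · rw [key, transpose_smul, Matrix.smul_mul, smul_smul, hc, one_smul]; exact h2
  · have key2 : Zs - Xs * Ysᵀ = -((β / (α + β)) • Astar (A (Xs * Ysᵀ) - b)) := by
      rw [← key]; abel
    rw [key2, hAZ, _root_.map_smul, smul_neg, smul_smul, smul_smul, hc, hd, one_smul]
    exact neg_add_cancel _
end

section
/- Let {F_k} be a sequence of real numbers bounded below, let N ≥ 0 be an integer, c > 0, and suppose real sequences {d_k} with d_k ≥ 0 satisfy F_{k+1} − max_{[k−N]_+ ≤ i ≤ k} F_i ≤ −(c/2) d_k for all k ≥ 0, where [t]_+ = max{t,0}. Define ℓ(k) ∈ argmax{F_i : [k−N]_+ ≤ i ≤ k}. Then the sequence {F_{ℓ(k)}} is non-increasing and convergent, and d_{ℓ(k)−1} → 0 as k → ∞. -/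
/-- non-monotone line search convergence. If `{F_k}` is bounded below,
`d_k ≥ 0`, `F_{k+1} − max_{[k−N]_+ ≤ i ≤ k} F_i ≤ −(c/2) d_k`, and `ℓ(k)` attains the
sliding-window maximum, then `{F_{ℓ(k)}}` is non-increasing and convergent, and
`d_{ℓ(k)−1} → 0`. -/
theorem stmt19 (F d : ℕ → ℝ) (hbdd : BddBelow (Set.range F))
    (N : ℕ) (c : ℝ) (hc : 0 < c) (hd : ∀ k, 0 ≤ d k)
    (ℓ : ℕ → ℕ)
    (hmem : ∀ k, ℓ k ∈ Finset.Icc (k - N) k)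
    (hmax : ∀ k, ∀ i ∈ Finset.Icc (k - N) k, F i ≤ F (ℓ k))
    (hdec : ∀ k, F (k + 1) - F (ℓ k) ≤ -(c / 2) * d k) :
    (∀ k, F (ℓ (k + 1)) ≤ F (ℓ k)) ∧
    (∃ L : ℝ, Filter.Tendsto (fun k => F (ℓ k)) Filter.atTop (nhds L)) ∧
    Filter.Tendsto (fun k => d (ℓ k - 1)) Filter.atTop (nhds 0) := by
  have hstep : ∀ k, F (ℓ (k + 1)) ≤ F (ℓ k) := by
    intro k
    rcases (Finset.mem_Icc.1 (hmem (k + 1))).2.lt_or_eq with h | h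
    · exact hmax k _ (Finset.mem_Icc.2 ⟨le_trans (Nat.sub_le_sub_right (Nat.le_succ k) N)
        (Finset.mem_Icc.1 (hmem (k + 1))).1, Nat.lt_succ_iff.1 h⟩)
    · rw [h]
      have := hdec k
      nlinarith [hd k]
  have hanti : Antitone (fun k => F (ℓ k)) := antitone_nat_of_succ_le hstep
  have hbdd' : BddBelow (Set.range fun k => F (ℓ k)) := by
    apply hbdd.mono
    rintro x ⟨k, rfl⟩
    exact ⟨ℓ k, rfl⟩
  obtain ⟨L, hL⟩ : ∃ L, Filter.Tendsto (fun k => F (ℓ k)) Filter.atTop (nhds L) :=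
    ⟨_, tendsto_atTop_ciInf hanti hbdd'⟩
  refine ⟨hstep, ⟨L, hL⟩, ?_⟩
  have hℓtop : Filter.Tendsto (fun k => ℓ k - 1) Filter.atTop Filter.atTop := by
    refine Filter.tendsto_atTop_atTop.2 fun b => ⟨b + N + 1, fun k hk => ?_⟩
    have h1 : b + 1 ≤ ℓ k := le_trans (by omega) (Finset.mem_Icc.1 (hmem k)).1
    omega
  have hcomp : Filter.Tendsto (fun k => F (ℓ (ℓ k - 1)) - F (ℓ k)) Filter.atTop (nhds 0) := by
    have := (hL.comp hℓtop).sub hL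
    simpa using this
  have hub : ∀ᶠ k in Filter.atTop, d (ℓ k - 1) ≤ (2 / c) * (F (ℓ (ℓ k - 1)) - F (ℓ k)) := by
    filter_upwards [Filter.eventually_ge_atTop (N + 1)] with k hk
    have h1 : 1 ≤ ℓ k := le_trans (by omega) (Finset.mem_Icc.1 (hmem k)).1
    have := hdec (ℓ k - 1)
    rw [Nat.sub_add_cancel h1] at this
    rw [div_mul_eq_mul_div, le_div_iff₀ hc]
    nlinarith
  have hub' : Filter.Tendsto (fun k => (2 / c) * (F (ℓ (ℓ k - 1)) - F (ℓ k)))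
      Filter.atTop (nhds 0) := by
    simpa using hcomp.const_mul (2 / c)
  exact squeeze_zero' (Filter.Eventually.of_forall fun k => hd _) hub hub'
end
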